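/- arXiv:1402.2102 — 3 statements merged into one kernel-verified Lean document; each statement's English description precedes it below -/
import Mathlib

section
/- Let ρ be a right corner of extent e starting at position k, in an unfolding of the constraint graph of a difference bounds constraint over N variables, and let d ∈ {1,…,e}. Then there exists a subpath ρ' of ρ which is a basic right corner of extent d starting at position k+e−d. -/
/- ## Difference bounds constraints and their relations -/

/-- Valuations of `N` integer variables. -/
abbrev Val (N : ℕ) := Fin N → ℤ

/-- An atomic proposition `u - v ≤ c` where `u, v` range over the unprimed
(`Sum.inl`) and primed (`Sum.inr`) variables. -/
abbrev Atom (N : ℕ) := (Fin N ⊕ Fin N) × (Fin N ⊕ Fin N) × ℤ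

/-- A vertex of an unfolded constraint graph: a position together with a variable. -/
abbrev Vtx (N : ℕ) := ℤ × Fin N

/-- A difference bounds constraint: a finite conjunction of atomic propositions. -/
structure DBC (N : ℕ) where
  atoms : Finset (Atom N)

/-- A path in an unfolded constraint graph: a first vertex followed by a list of
steps, each carrying a weight and a target vertex. -/
structure UPath (N : ℕ) where
  first : Vtx N
  steps : List (ℤ × Vtx N)

variable {N : ℕ}

def interp (ν ν' : Val N) : Fin N ⊕ Fin N → ℤ
  | Sum.inl i => ν i
  | Sum.inr i => ν' i

/-- The relation on valuations defined by a difference bounds constraint. -/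
def DBC.rel (R : DBC N) (ν ν' : Val N) : Prop :=
  ∀ a ∈ R.atoms, interp ν ν' a.1 - interp ν ν' a.2.1 ≤ a.2.2

/-- Relational composition. -/
def relComp (P Q : Val N → Val N → Prop) (ν ν' : Val N) : Prop :=
  ∃ μ, P ν μ ∧ Q μ ν'

/-- `n`-fold relational composition, with `relPow P 0` the identity relation. -/
def relPow (P : Val N → Val N → Prop) : ℕ → Val N → Val N → Prop
  | 0 => Eq
  | n + 1 => relComp P (relPow P n)

/-- A DB constraint is balanced when `x i - x j ≤ c` is a conjunct iff
`x' i - x' j ≤ c` is a conjunct. -/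
def DBC.Balanced (R : DBC N) : Prop :=
  ∀ (i j : Fin N) (c : ℤ),
    (Sum.inl i, Sum.inl j, c) ∈ R.atoms ↔ (Sum.inr i, Sum.inr j, c) ∈ R.atoms

/-- Forward one-directional: every atom is of the form `x i - x' j ≤ c`. -/
def DBC.IsFw (R : DBC N) : Prop :=
  ∀ a ∈ R.atoms, ∃ (i j : Fin N) (c : ℤ), a = (Sum.inl i, Sum.inr j, c)

/-- Backward one-directional: every atom is of the form `x' i - x j ≤ c`. -/
def DBC.IsBw (R : DBC N) : Prop :=
  ∀ a ∈ R.atoms, ∃ (i j : Fin N) (c : ℤ), a = (Sum.inr i, Sum.inl j, c)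

def DBC.IsOneDirectional (R : DBC N) : Prop := R.IsFw ∨ R.IsBw

/- ## Unfolded constraint graphs -/

/-- The endpoint of an atom placed at copy `p` of the unfolding: unprimed
variables live at position `p`, primed ones at position `p + 1`. -/
def endpt (p : ℤ) : Fin N ⊕ Fin N → Vtx N
  | Sum.inl i => (p, i)
  | Sum.inr i => (p + 1, i)

/-- Edge of the unfolding contributed by copy `p` of the constraint graph. -/
def DBC.EdgeAt (R : DBC N) (p : ℤ) (u v : Vtx N) (c : ℤ) : Prop :=
  ∃ s t, (s, t, c) ∈ R.atoms ∧ u = endpt p s ∧ v = endpt p t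

/-- Edge of the bi-infinite unfolding. -/
def DBC.Edge (R : DBC N) (u v : Vtx N) (c : ℤ) : Prop :=
  ∃ p : ℤ, R.EdgeAt p u v c

/-- Edge of the `n`-times unfolding `G_R^n` (copies `0, …, n-1`). -/
def DBC.EdgeN (R : DBC N) (n : ℕ) (u v : Vtx N) (c : ℤ) : Prop :=
  ∃ p : ℤ, 0 ≤ p ∧ p < (n : ℤ) ∧ R.EdgeAt p u v c

namespace UPath

/-- The list of vertices traversed by a path. -/
def vertices (ρ : UPath N) : List (Vtx N) := ρ.first :: ρ.steps.map Prod.snd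

/-- The last vertex of a path. -/
def last (ρ : UPath N) : Vtx N := (ρ.steps.map Prod.snd).getLastD ρ.first

/-- The weight of a path: the sum of its edge weights. -/
def weight (ρ : UPath N) : ℤ := (ρ.steps.map Prod.fst).sum

def posList (ρ : UPath N) : List ℤ := ρ.vertices.map Prod.fst

/-- The set of positions of the vertices of a path. -/
def posFinset (ρ : UPath N) : Finset ℤ := ρ.posList.toFinset

theorem posFinset_nonempty (ρ : UPath N) : ρ.posFinset.Nonempty := by
  refine ⟨ρ.first.1, ?_⟩
  simp [posFinset, posList, vertices]

/-- The extent of a path: the difference between its maximal and minimal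
position. -/
def extent (ρ : UPath N) : ℤ :=
  ρ.posFinset.max' ρ.posFinset_nonempty - ρ.posFinset.min' ρ.posFinset_nonempty

/-- The list of variables traversed by a path. -/
def varList (ρ : UPath N) : List (Fin N) := ρ.vertices.map Prod.snd

/-- The steps form a chain of edges w.r.t. the edge relation `E`. -/
def EdgeChain (E : Vtx N → Vtx N → ℤ → Prop) : Vtx N → List (ℤ × Vtx N) → Prop
  | _, [] => True
  | u, s :: rest => E u s.2 s.1 ∧ EdgeChain E s.2 rest

/-- The path lies in the bi-infinite unfolding of the constraint graph of `R`. -/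
def InUnf (R : DBC N) (ρ : UPath N) : Prop := EdgeChain R.Edge ρ.first ρ.steps

/-- The path lies in the `n`-times unfolding `G_R^n`. -/
def InUnfN (R : DBC N) (n : ℕ) (ρ : UPath N) : Prop :=
  EdgeChain (R.EdgeN n) ρ.first ρ.steps

/-- Concatenation (the caller must ensure `π.first = ρ.last` for this to be a
genuine path concatenation). -/
def append (ρ π : UPath N) : UPath N := ⟨ρ.first, ρ.steps ++ π.steps⟩

/-- Shift a path by `k` positions. -/
def shift (k : ℤ) (ρ : UPath N) : UPath N :=
  ⟨(ρ.first.1 + k, ρ.first.2), ρ.steps.map fun s => (s.1, (s.2.1 + k, s.2.2))⟩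

/-- Concatenation with implicit shifting: `π` is shifted so that its first
vertex is at the position of the last vertex of `ρ`. -/
def glue (ρ π : UPath N) : UPath N := ρ.append (shift (ρ.last.1 - π.first.1) π)

/-- `k`-fold concatenation of a (repeating) path with itself, each copy shifted
so that its first vertex coincides with the last vertex of the previous copy. -/
def pow (μ : UPath N) : ℕ → UPath N
  | 0 => ⟨μ.first, []⟩
  | k + 1 => (pow μ k).glue μ

def IsVertical (ρ : UPath N) : Prop := ρ.last.1 = ρ.first.1

def IsForward (ρ : UPath N) : Prop := ρ.first.1 < ρ.last.1

def IsBackward (ρ : UPath N) : Prop := ρ.last.1 < ρ.first.1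

/-- A path is repeating if its endpoints are copies of the same variable at
different positions. -/
def IsRepeating (ρ : UPath N) : Prop := ρ.first.1 ≠ ρ.last.1 ∧ ρ.first.2 = ρ.last.2

/-- Relative length: the absolute difference of the first and last positions. -/
def relLen (ρ : UPath N) : ℤ := |ρ.last.1 - ρ.first.1|

/-- Right corner of some extent `d`: a nonempty vertical path whose positions
are exactly `{k, …, k+d}` where `k` is its first (= last) position. -/
def IsRightCorner (ρ : UPath N) : Prop :=
  ρ.steps ≠ [] ∧ ρ.last.1 = ρ.first.1 ∧
  ∃ d : ℕ, ρ.posFinset = Finset.Icc ρ.first.1 (ρ.first.1 + (d : ℤ))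

/-- Left corner of some extent `d`: positions exactly `{k−d, …, k}`. -/
def IsLeftCorner (ρ : UPath N) : Prop :=
  ρ.steps ≠ [] ∧ ρ.last.1 = ρ.first.1 ∧
  ∃ d : ℕ, ρ.posFinset = Finset.Icc (ρ.first.1 - (d : ℤ)) ρ.first.1

def IsCorner (ρ : UPath N) : Prop := ρ.IsRightCorner ∨ ρ.IsLeftCorner

/-- A corner is basic if its start/end position does not occur among the
positions of its intermediate vertices. -/
def IsBasic (ρ : UPath N) : Prop :=
  ∀ s ∈ ρ.steps.dropLast, s.2.1 ≠ ρ.first.1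

/-- A long corner: a corner of extent exceeding `N²`. -/
def IsLongCorner (ρ : UPath N) : Prop := ρ.IsCorner ∧ (N : ℤ) ^ 2 < ρ.extent

/-- An lb-corner: a corner that is both long and basic. -/
def IsLBCorner (ρ : UPath N) : Prop := ρ.IsLongCorner ∧ ρ.IsBasic

/-- `θ` is a (contiguous) subpath of `ρ`. -/
def IsSubpath (θ ρ : UPath N) : Prop :=
  ∃ pre post, ρ.steps = pre ++ θ.steps ++ post ∧ θ.first = (UPath.mk ρ.first pre).last

/-- A path is essential if its traversed variables are pairwise distinct,
except that the first and the last variable may coincide. -/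
def IsEssential (ρ : UPath N) : Prop :=
  ∀ (a b : ℕ) (ha : a < ρ.varList.length) (hb : b < ρ.varList.length),
    a < b → ρ.varList.get ⟨a, ha⟩ = ρ.varList.get ⟨b, hb⟩ →
      a = 0 ∧ b = ρ.varList.length - 1

/-- An extremal path of `G_R^n`: both endpoints are at position `0` or `n`. -/
def IsExtremalIn (n : ℕ) (ρ : UPath N) : Prop :=
  (ρ.first.1 = 0 ∨ ρ.first.1 = (n : ℤ)) ∧ (ρ.last.1 = 0 ∨ ρ.last.1 = (n : ℤ))

/-- `ρ'` is compatible with `ρ`: same first vertex, same last vertex and weight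
not greater than that of `ρ`. -/
def Compatible (ρ' ρ : UPath N) : Prop :=
  ρ'.first = ρ.first ∧ ρ'.last = ρ.last ∧ ρ'.weight ≤ ρ.weight

/-- A path in `G_R^n` is normalized if none of its subpaths traversing only
positions in `{N², …, n−N²}` is a long corner. -/
def IsNormalized (n : ℕ) (ρ : UPath N) : Prop :=
  ∀ θ : UPath N, θ.IsSubpath ρ →
    θ.posFinset ⊆ Finset.Icc ((N : ℤ) ^ 2) ((n : ℤ) - (N : ℤ) ^ 2) →
    ¬ θ.IsLongCorner

end UPath

/- ## UPath schemes -/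

/-- `σ.λ*.σ'` is a path scheme: `λ` is empty or an essential repeating path,
the variables match up for concatenation, and `σ.λ.σ'` is a non-empty path. -/
def IsSchemeTriple (σ lam σ' : UPath N) : Prop :=
  (lam.steps = [] ∨ (lam.IsEssential ∧ lam.IsRepeating)) ∧
  lam.first.2 = σ.last.2 ∧ σ'.first.2 = lam.last.2 ∧
  (σ.glue (lam.glue σ')).steps ≠ []

/-- The element `σ.λ^m.σ'` of the set of paths denoted by the scheme `σ.λ*.σ'`. -/
def schemeElem (σ lam σ' : UPath N) (m : ℕ) : UPath N :=
  σ.glue ((lam.pow m).glue σ')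

/-- Shape of the `λ` component of a scheme of the class `Π_{ijkpq}`:
a path `x_k^(0) → … → x_k^(p)` of length `p` in the unfolding. -/
def LamShape (R : DBC N) (k : Fin N) (p : ℕ) (lam : UPath N) : Prop :=
  lam.InUnf R ∧ lam.first = ((0 : ℤ), k) ∧ lam.last = ((p : ℤ), k) ∧
  lam.steps.length = p

/-- Shape of the `σ, σ'` components of a scheme of the class `Π_{ijkpq}`:
`σ : x_i^(0) → … → x_k^(r)` and `σ' : x_k^(r) → … → x_j^(q)` for some
`0 ≤ r ≤ q`, with `|σ.σ'| = q`. -/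
def SigmaShape (R : DBC N) (i j k : Fin N) (q : ℕ) (σ σ' : UPath N) : Prop :=
  ∃ r : ℕ, r ≤ q ∧ σ.InUnf R ∧ σ'.InUnf R ∧
    σ.first = ((0 : ℤ), i) ∧ σ.last = ((r : ℤ), k) ∧
    σ'.first = ((r : ℤ), k) ∧ σ'.last = ((q : ℤ), j) ∧
    σ.steps.length + σ'.steps.length = q

/-- Membership of the scheme `σ.λ*.σ'` in the class `Π_{ijkpq}`. -/
def InPi (R : DBC N) (i j k : Fin N) (p q : ℕ) (σ lam σ' : UPath N) : Prop :=
  IsSchemeTriple σ lam σ' ∧ LamShape R k p lam ∧ SigmaShape R i j k q σ σ'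

/-- The set `S_ij` of quadruples `(|σ.σ'|, |λ|, w(σ.σ'), w(λ))` arising from the
minimal representative schemes `θ_{ijkpq}` of the nonempty classes `Π_{ijkpq}`. -/
def Sset (R : DBC N) (i j : Fin N) : Set (ℕ × ℕ × ℤ × ℤ) :=
  { t | ∃ (k : Fin N) (p q : ℕ) (σ lam σ' : UPath N),
      p ≤ N ∧ q ≤ N ^ 4 ∧ 0 < p + q ∧
      (∃ ν μ ν' : UPath N, InPi R i j k p q ν μ ν') ∧
      LamShape R k p lam ∧
      (∀ lam', LamShape R k p lam' → lam.weight ≤ lam'.weight) ∧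
      SigmaShape R i j k q σ σ' ∧
      (∀ σ₁ σ₁', SigmaShape R i j k q σ₁ σ₁' →
        σ.weight + σ'.weight ≤ σ₁.weight + σ₁'.weight) ∧
      t = (q, p, σ.weight + σ'.weight, lam.weight) }

/- ## Segments -/

/-- An edge from `u` to `v` has both endpoints at positions within `{p, …, q}`. -/
def StepInRange (p q : ℤ) (u v : Vtx N) : Prop :=
  p ≤ u.1 ∧ u.1 ≤ q ∧ p ≤ v.1 ∧ v.1 ≤ q

/-- `ξ` is an element of `segments(ρ, p, q)`: a nonempty maximal subpath of `ρ`
whose positions lie within `{p, …, q}`, immediately preceded and followed (if at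
all) by edges not lying within `{p, …, q}`. -/
def IsSegmentOf (ρ : UPath N) (p q : ℤ) (ξ : UPath N) : Prop :=
  ξ.steps ≠ [] ∧
  ∃ pre post, ρ.steps = pre ++ ξ.steps ++ post ∧
    ξ.first = (UPath.mk ρ.first pre).last ∧
    ξ.posFinset ⊆ Finset.Icc p q ∧
    (∀ pre' c u, pre = pre' ++ [(c, u)] →
      ¬ StepInRange p q (UPath.mk ρ.first pre').last u) ∧
    (∀ c v post', post = (c, v) :: post' → ¬ StepInRange p q ξ.last v)

/- ## The strengthened relation and one-directional approximations -/

/-- `S_fw`: the valuations `ν` such that `∃ ν'. (ν,ν') ∈ R^{N²}`. -/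
def Sfw (R : DBC N) (ν : Val N) : Prop := ∃ ν', relPow R.rel (N ^ 2) ν ν'

/-- `S_bw`: the valuations `ν'` such that `∃ ν. (ν,ν') ∈ R^{N²}`. -/
def Sbw (R : DBC N) (ν' : Val N) : Prop := ∃ ν, relPow R.rel (N ^ 2) ν ν'

/-- The strengthened relation `R_s = R ∧ S_fw(x) ∧ S_bw(x')`. -/
def Rs (R : DBC N) (ν ν' : Val N) : Prop := R.rel ν ν' ∧ Sfw R ν ∧ Sbw R ν'

/-- `R_fw`: the strongest forward one-directional DB relation implied by `R_s`. -/
def Rfw (R : DBC N) (ν ν' : Val N) : Prop :=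
  ∀ (i j : Fin N) (c : ℤ), (∀ μ μ', Rs R μ μ' → μ i - μ' j ≤ c) → ν i - ν' j ≤ c

/-- `R_bw`: the strongest backward one-directional DB relation implied by `R_s`. -/
def Rbw (R : DBC N) (ν ν' : Val N) : Prop :=
  ∀ (i j : Fin N) (c : ℤ), (∀ μ μ', Rs R μ μ' → μ' i - μ j ≤ c) → ν' i - ν j ≤ c

/- ## Corner decompositions -/

/-- The pumped path `η.μ^k.τ.μ'^k.η'`. -/
def pumped (η μ τ μ' η' : UPath N) (k : ℕ) : UPath N :=
  η.glue ((μ.pow k).glue (τ.glue ((μ'.pow k).glue η')))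

/-- The decomposition `ρ' = η.μ.τ.μ'.η'` of a right corner as in the corner
shortening / decomposition lemma. -/
def DecompRight (ρ' : UPath N) : Prop :=
  ∃ η μ τ μ' η' : UPath N,
    ρ' = η.append (μ.append (τ.append (μ'.append η'))) ∧
    μ.first = η.last ∧ τ.first = μ.last ∧ μ'.first = τ.last ∧ η'.first = μ'.last ∧
    μ.IsForward ∧ μ.IsRepeating ∧ μ'.IsBackward ∧ μ'.IsRepeating ∧
    τ.IsRightCorner ∧
    η.relLen = η'.relLen ∧
    1 ≤ μ.relLen ∧ μ.relLen = μ'.relLen ∧ μ.relLen ≤ (N : ℤ) ^ 2 ∧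
    μ.weight + μ'.weight < 0 ∧
    ∀ k : ℕ,
      (pumped η μ τ μ' η' k).IsRightCorner ∧
      (∀ θ : UPath N, θ.IsSubpath (η.glue (μ.pow k)) → ¬ θ.IsLBCorner) ∧
      (∀ θ : UPath N, θ.IsSubpath ((μ'.pow k).glue η') → ¬ θ.IsLBCorner)

/-- The decomposition `ρ' = η.μ.τ.μ'.η'` of a left corner as in the corner
shortening / decomposition lemma. -/
def DecompLeft (ρ' : UPath N) : Prop :=
  ∃ η μ τ μ' η' : UPath N,
    ρ' = η.append (μ.append (τ.append (μ'.append η'))) ∧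
    μ.first = η.last ∧ τ.first = μ.last ∧ μ'.first = τ.last ∧ η'.first = μ'.last ∧
    μ.IsBackward ∧ μ.IsRepeating ∧ μ'.IsForward ∧ μ'.IsRepeating ∧
    τ.IsLeftCorner ∧
    η.relLen = η'.relLen ∧
    1 ≤ μ.relLen ∧ μ.relLen = μ'.relLen ∧ μ.relLen ≤ (N : ℤ) ^ 2 ∧
    μ.weight + μ'.weight < 0 ∧
    ∀ k : ℕ,
      (pumped η μ τ μ' η' k).IsLeftCorner ∧
      (∀ θ : UPath N, θ.IsSubpath (η.glue (μ.pow k)) → ¬ θ.IsLBCorner) ∧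
      (∀ θ : UPath N, θ.IsSubpath ((μ'.pow k).glue η') → ¬ θ.IsLBCorner)

/- ## Balanced closure -/

/-- Swap an unprimed-unprimed atom with its primed-primed counterpart. -/
def flipAtom : Atom N → Atom N
  | (Sum.inl i, Sum.inl j, c) => (Sum.inr i, Sum.inr j, c)
  | (Sum.inr i, Sum.inr j, c) => (Sum.inl i, Sum.inl j, c)
  | a => a

/-- The balanced closure `R_b` of a DB constraint `R`. -/
def DBC.balClosure (R : DBC N) : DBC N := ⟨R.atoms ∪ R.atoms.image flipAtom⟩

/-! Along a path of the unfolding, positions change by at most one per edge. Let `L = k + e - d`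
and let `M` be a vertex at the top position `k + e`. Take the last vertex at or below `L` before `M`
and the first one after `M`: both are at position exactly `L`, the path stays strictly above `L` in
between, and by the discrete intermediate value property it sweeps every position from `L` up to
`k + e`. -/

theorem DBC.Edge.abs_sub_le_one {R : DBC N} {u v : Vtx N} {c : ℤ} (h : R.Edge u v c) :
    |v.1 - u.1| ≤ 1 := by
  obtain ⟨p, s, t, -, rfl, rfl⟩ := h
  cases s <;> cases t <;> simp [endpt]

theorem exists_upcrossing {g : ℕ → ℤ} (hg : ∀ t, g (t + 1) ≤ g t + 1) {a b : ℕ} {L : ℤ}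
    (hab : a ≤ b) (ha : g a ≤ L) (hb : L < g b) :
    ∃ i, a ≤ i ∧ i < b ∧ g i = L ∧ ∀ t, i < t → t ≤ b → L < g t := by
  induction b, hab using Nat.le_induction with
  | base => omega
  | succ b hab ih =>
    by_cases hgb : g b ≤ L
    · exact ⟨b, hab, b.lt_succ_self, by linarith [hg b], fun t h1 h2 =>
        (show t = b + 1 by omega) ▸ hb⟩
    · obtain ⟨i, hai, hib, hi, hgt⟩ := ih (not_le.1 hgb)
      refine ⟨i, hai, by omega, hi, fun t h1 h2 => ?_⟩
      rcases Nat.lt_or_ge t (b + 1) with h | h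
      · exact hgt t h1 (by omega)
      · exact (show t = b + 1 by omega) ▸ hb

theorem exists_downcrossing {g : ℕ → ℤ} (hg : ∀ t, g t ≤ g (t + 1) + 1) {a b : ℕ} {L : ℤ}
    (hab : a ≤ b) (ha : L < g a) (hb : g b ≤ L) :
    ∃ j, a < j ∧ j ≤ b ∧ g j = L ∧ ∀ t, a ≤ t → t < j → L < g t := by
  obtain ⟨m, rfl⟩ := Nat.exists_eq_add_of_le hab
  clear hab
  induction m generalizing a with
  | zero => exact absurd hb (not_le.2 ha)
  | succ m ih =>
    by_cases hga : g (a + 1) ≤ L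
    · exact ⟨a + 1, a.lt_succ_self, by omega, by linarith [hg a], fun t h1 h2 =>
        (show t = a by omega) ▸ ha⟩
    · obtain ⟨j, haj, hjb, hj, hgt⟩ :=
        ih (a := a + 1) (not_le.1 hga) (by rwa [Nat.add_right_comm, Nat.add_assoc])
      refine ⟨j, by omega, by omega, hj, fun t h1 h2 => ?_⟩
      rcases Nat.lt_or_ge a t with h | h
      · exact hgt t h h2
      · exact (show t = a by omega) ▸ ha

theorem exists_eq_of_le_of_le {g : ℕ → ℤ} (hg : ∀ t, g (t + 1) ≤ g t + 1) {a b : ℕ} {x : ℤ}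
    (hab : a ≤ b) (ha : g a ≤ x) (hb : x ≤ g b) : ∃ t, a ≤ t ∧ t ≤ b ∧ g t = x := by
  rcases hb.lt_or_eq with hb | rfl
  · obtain ⟨t, hat, htb, ht, -⟩ := exists_upcrossing hg hab ha hb
    exact ⟨t, hat, htb.le, ht⟩
  · exact ⟨b, hab, le_rfl, rfl⟩

theorem exists_excursion {g : ℕ → ℤ} (hg : ∀ t, |g (t + 1) - g t| ≤ 1) {M n : ℕ} {L : ℤ}
    (hMn : M ≤ n) (h0 : g 0 ≤ L) (hn : g n ≤ L) (hM : L < g M) :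
    ∃ i j, i < M ∧ M < j ∧ j ≤ n ∧ g i = L ∧ g j = L ∧ ∀ t, i < t → t < j → L < g t := by
  obtain ⟨i, -, hiM, hi, hi_gt⟩ :=
    exists_upcrossing (fun t => by linarith [(abs_le.1 (hg t)).2]) (Nat.zero_le M) h0 hM
  obtain ⟨j, hMj, hjn, hj, hj_gt⟩ :=
    exists_downcrossing (fun t => by linarith [(abs_le.1 (hg t)).1]) hMn hM hn
  exact ⟨i, j, hiM, hMj, hjn, hi, hj, fun t h1 h2 =>
    (le_or_gt t M).elim (hi_gt t h1) fun h => hj_gt t h.le h2⟩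

namespace UPath

/-- Past the end of the path, `ρ.pos t` stays at the position of the last vertex. -/
def pos (ρ : UPath N) (t : ℕ) : ℤ := ρ.posList.getD t ρ.last.1

def take (m : ℕ) (ρ : UPath N) : UPath N := ⟨ρ.first, ρ.steps.take m⟩

def drop (i : ℕ) (ρ : UPath N) : UPath N :=
  ⟨(UPath.mk ρ.first (ρ.steps.take i)).last, ρ.steps.drop i⟩

theorem posList_length (ρ : UPath N) : ρ.posList.length = ρ.steps.length + 1 := by
  simp [posList, vertices]

theorem last_mk_cons (u : Vtx N) (s : ℤ × Vtx N) (l : List (ℤ × Vtx N)) :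
    (UPath.mk u (s :: l)).last = (UPath.mk s.2 l).last := by
  simp only [last, List.map_cons, List.getLastD_cons]

theorem pos_zero (ρ : UPath N) : ρ.pos 0 = ρ.first.1 := rfl

theorem pos_mk_nil (u : Vtx N) (t : ℕ) : (UPath.mk u []).pos t = u.1 := by
  cases t <;> rfl

theorem pos_mk_cons_succ (u : Vtx N) (s : ℤ × Vtx N) (l : List (ℤ × Vtx N)) (t : ℕ) :
    (UPath.mk u (s :: l)).pos (t + 1) = (UPath.mk s.2 l).pos t := by
  simp only [pos, last_mk_cons]
  rfl

theorem pos_succ (ρ : UPath N) {t : ℕ} (ht : t < ρ.steps.length) :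
    ρ.pos (t + 1) = ρ.steps[t].2.1 := by
  rw [pos, List.getD_eq_getElem _ _ (by rw [posList_length]; omega)]
  simp [posList, vertices]

theorem pos_of_length_le (ρ : UPath N) {t : ℕ} (ht : ρ.steps.length ≤ t) :
    ρ.pos t = ρ.last.1 := by
  obtain ⟨u, l⟩ := ρ
  induction l generalizing u t with
  | nil => exact pos_mk_nil u t
  | cons s l ih =>
    cases t with
    | zero => simp at ht
    | succ t => rw [pos_mk_cons_succ, last_mk_cons, ih s.2 (by simpa using ht)]

theorem pos_take (ρ : UPath N) {m t : ℕ} (ht : t ≤ m) : (ρ.take m).pos t = ρ.pos t := by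
  obtain ⟨u, l⟩ := ρ
  induction l generalizing u m t with
  | nil => simp [take]
  | cons s l ih =>
    cases t with
    | zero => rfl
    | succ t =>
      cases m with
      | zero => omega
      | succ m =>
        simp only [take, List.take_succ_cons, pos_mk_cons_succ] at ih ⊢
        exact ih (u := s.2) (m := m) (t := t) (by omega)

theorem pos_drop (ρ : UPath N) (i t : ℕ) : (ρ.drop i).pos t = ρ.pos (i + t) := by
  obtain ⟨u, l⟩ := ρ
  induction i generalizing u l with
  | zero => simp [drop, last]
  | succ i ih =>
    cases l with
    | nil => simp [drop, last, pos_mk_nil]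
    | cons s l =>
      rw [Nat.add_right_comm, pos_mk_cons_succ, ← ih]
      simp [drop, List.take_succ_cons, last_mk_cons]

theorem abs_pos_succ_sub_le_one {R : DBC N} {ρ : UPath N} (hρ : ρ.InUnf R) (t : ℕ) :
    |ρ.pos (t + 1) - ρ.pos t| ≤ 1 := by
  obtain ⟨u, l⟩ := ρ
  induction l generalizing u t with
  | nil => simp [pos_mk_nil]
  | cons s l ih =>
    obtain ⟨hedge, hrest⟩ := hρ
    cases t with
    | zero => simpa [pos_mk_cons_succ, pos_zero] using hedge.abs_sub_le_one
    | succ t => simpa only [pos_mk_cons_succ] using ih (u := s.2) t hrest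

theorem mem_posFinset {ρ : UPath N} {x : ℤ} :
    x ∈ ρ.posFinset ↔ ∃ t ≤ ρ.steps.length, ρ.pos t = x := by
  simp only [posFinset, List.mem_toFinset, List.mem_iff_getElem, posList_length, pos]
  constructor
  · rintro ⟨t, ht, rfl⟩
    exact ⟨t, by omega, List.getD_eq_getElem _ _ _⟩
  · rintro ⟨t, ht, rfl⟩
    exact ⟨t, by omega, (List.getD_eq_getElem _ _ _).symm⟩

theorem pos_mem_posFinset (ρ : UPath N) (t : ℕ) : ρ.pos t ∈ ρ.posFinset := by
  rcases le_total t ρ.steps.length with ht | ht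
  · exact mem_posFinset.2 ⟨t, ht, rfl⟩
  · exact mem_posFinset.2 ⟨_, le_rfl, by rw [pos_of_length_le _ le_rfl, pos_of_length_le _ ht]⟩

theorem isBasic_of_pos {ρ : UPath N}
    (h : ∀ t, 0 < t → t < ρ.steps.length → ρ.pos t ≠ ρ.first.1) : ρ.IsBasic := by
  intro s hs
  obtain ⟨t, ht, rfl⟩ := List.mem_iff_getElem.1 hs
  rw [List.length_dropLast] at ht
  rw [List.getElem_dropLast, ← pos_succ]
  exact h (t + 1) t.succ_pos (by omega)

theorem isSubpath_take_drop (ρ : UPath N) {i j : ℕ} (hij : i ≤ j) :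
    ((ρ.drop i).take (j - i)).IsSubpath ρ := by
  refine ⟨ρ.steps.take i, ρ.steps.drop j, ?_, rfl⟩
  conv_lhs => rw [← List.take_append_drop i ρ.steps,
    ← List.take_append_drop (j - i) (ρ.steps.drop i), List.drop_drop, Nat.add_sub_cancel' hij]
  simp only [take, drop, List.append_assoc]

theorem extent_eq_of_posFinset_eq_Icc {ρ : UPath N} {a b : ℤ} (h : ρ.posFinset = Finset.Icc a b)
    (hab : a ≤ b) : ρ.extent = b - a := by
  have hne := ρ.posFinset_nonempty
  have hmax : ρ.posFinset.max' hne = b :=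
    (Finset.isGreatest_max' _ hne).unique (by rw [h, Finset.coe_Icc]; exact isGreatest_Icc hab)
  have hmin : ρ.posFinset.min' hne = a :=
    (Finset.isLeast_min' _ hne).unique (by rw [h, Finset.coe_Icc]; exact isLeast_Icc hab)
  rw [extent, hmax, hmin]

theorem isRightCorner_of_posFinset_eq_Icc {ρ : UPath N} {b : ℤ} (hne : ρ.steps ≠ [])
    (hvert : ρ.last.1 = ρ.first.1) (h : ρ.posFinset = Finset.Icc ρ.first.1 b) :
    ρ.IsRightCorner := by
  have hb : ρ.first.1 ≤ b := (Finset.mem_Icc.1 (h ▸ ρ.pos_mem_posFinset 0)).2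
  refine ⟨hne, hvert, (b - ρ.first.1).toNat, ?_⟩
  rw [h, Int.toNat_of_nonneg (by omega)]
  ring_nf

theorem length_steps_take_drop (ρ : UPath N) {i j : ℕ} (hj : j ≤ ρ.steps.length) :
    ((ρ.drop i).take (j - i)).steps.length = j - i := by
  simp only [take, drop, List.length_take, List.length_drop]
  omega

theorem mem_posFinset_take_drop (ρ : UPath N) {i j : ℕ} (hij : i ≤ j) (hj : j ≤ ρ.steps.length)
    {x : ℤ} : x ∈ ((ρ.drop i).take (j - i)).posFinset ↔ ∃ t, i ≤ t ∧ t ≤ j ∧ ρ.pos t = x := by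
  rw [mem_posFinset, length_steps_take_drop ρ hj]
  constructor
  · rintro ⟨t, ht, rfl⟩
    exact ⟨i + t, by omega, by omega, by rw [pos_take _ ht, pos_drop]⟩
  · rintro ⟨t, hit, htj, rfl⟩
    exact ⟨t - i, by omega, by rw [pos_take _ (by omega), pos_drop, Nat.add_sub_cancel' hit]⟩

theorem exists_isBasic_isRightCorner {R : DBC N} {ρ : UPath N} (hρ : ρ.InUnf R) {M : ℕ} {L : ℤ}
    (hmax : ∀ t, ρ.pos t ≤ ρ.pos M) (hfirst : ρ.first.1 ≤ L) (hlast : ρ.last.1 ≤ L)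
    (hL : L < ρ.pos M) :
    ∃ ρ' : UPath N, ρ'.IsSubpath ρ ∧ ρ'.IsBasic ∧ ρ'.IsRightCorner ∧ ρ'.first.1 = L ∧
      ρ'.posFinset = Finset.Icc L (ρ.pos M) := by
  have hup t : ρ.pos (t + 1) ≤ ρ.pos t + 1 := by
    linarith [(abs_le.1 (abs_pos_succ_sub_le_one hρ t)).2]
  have hMn : M ≤ ρ.steps.length := by
    by_contra! h
    rw [pos_of_length_le _ h.le] at hL
    omega
  obtain ⟨i, j, hiM, hMj, hjn, hi, hj, hgt⟩ := exists_excursion (abs_pos_succ_sub_le_one hρ) hMn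
    hfirst (by rwa [pos_of_length_le _ le_rfl]) hL
  have hlen := length_steps_take_drop ρ (i := i) hjn
  have hpos t (ht : t ≤ j - i) : ((ρ.drop i).take (j - i)).pos t = ρ.pos (i + t) := by
    rw [pos_take _ ht, pos_drop]
  have hfirst' : ((ρ.drop i).take (j - i)).first.1 = L := by
    rw [← pos_zero, hpos 0 (Nat.zero_le _), Nat.add_zero, hi]
  have hrange : ((ρ.drop i).take (j - i)).posFinset = Finset.Icc L (ρ.pos M) := by
    ext x
    rw [mem_posFinset_take_drop ρ (by omega) hjn, Finset.mem_Icc]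
    constructor
    · rintro ⟨t, hit, htj, rfl⟩
      refine ⟨?_, hmax t⟩
      rcases hit.lt_or_eq with hit | rfl
      · rcases htj.lt_or_eq with htj | rfl
        · exact (hgt t hit htj).le
        · exact hj.ge
      · exact hi.ge
    · rintro ⟨hLx, hxM⟩
      obtain ⟨t, hit, htM, rfl⟩ := exists_eq_of_le_of_le hup hiM.le (hi ▸ hLx) hxM
      exact ⟨t, hit, by omega, rfl⟩
  refine ⟨_, isSubpath_take_drop ρ (by omega), isBasic_of_pos fun t ht0 ht => ?_,
    isRightCorner_of_posFinset_eq_Icc ?_ ?_ (by rw [hfirst', hrange]), hfirst', hrange⟩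
  · rw [hlen] at ht
    rw [hfirst', hpos t ht.le]
    exact (hgt _ (by omega) (by omega)).ne'
  · rw [← List.length_pos_iff, hlen]
    omega
  · rw [← pos_of_length_le _ le_rfl, hlen, hpos _ le_rfl, Nat.add_sub_cancel' (by omega), hj,
      hfirst']

end UPath

theorem statement9_general (N : ℕ) (R : DBC N) (ρ : UPath N)
    (hρ : ρ.InUnf R) (hrc : ρ.IsRightCorner)
    (k e : ℤ) (hk : ρ.first.1 = k) (he : ρ.extent = e)
    (d : ℤ) (hd1 : 1 ≤ d) (hde : d ≤ e) :
    ∃ ρ' : UPath N, ρ'.IsSubpath ρ ∧ ρ'.IsBasic ∧ ρ'.IsRightCorner ∧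
      ρ'.extent = d ∧ ρ'.first.1 = k + e - d := by
  obtain ⟨-, hvert, e', hpos⟩ := hrc
  rw [hk] at hpos
  have he' : (e' : ℤ) = e := by
    rw [← he, UPath.extent_eq_of_posFinset_eq_Icc hpos (by omega)]
    ring
  rw [he'] at hpos
  obtain ⟨M, -, hM⟩ := UPath.mem_posFinset.1 (hpos ▸ Finset.right_mem_Icc.2 (by omega) :
    k + e ∈ ρ.posFinset)
  have hmax t : ρ.pos t ≤ ρ.pos M := hM ▸ (Finset.mem_Icc.1 (hpos ▸ ρ.pos_mem_posFinset t)).2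
  obtain ⟨ρ', hsub, hbasic, hcorner, hfirst, hpos'⟩ :=
    UPath.exists_isBasic_isRightCorner hρ hmax (L := k + e - d) (by omega) (by omega) (by omega)
  refine ⟨ρ', hsub, hbasic, hcorner, ?_, hfirst⟩
  rw [UPath.extent_eq_of_posFinset_eq_Icc hpos' (by omega), hM]
  ring

/-- A right corner of extent `e` starting at position `k` has,
for each `1 ≤ d ≤ e`, a basic right corner subpath of extent `d` starting at
position `k + e − d`. -/
theorem statement9 (N : ℕ) (hN : 1 ≤ N) (R : DBC N) (ρ : UPath N)
    (hρ : ρ.InUnf R) (hrc : ρ.IsRightCorner)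
    (k e : ℤ) (hk : ρ.first.1 = k) (he : ρ.extent = e)
    (d : ℤ) (hd1 : 1 ≤ d) (hde : d ≤ e) :
    ∃ ρ' : UPath N, ρ'.IsSubpath ρ ∧ ρ'.IsBasic ∧ ρ'.IsRightCorner ∧
      ρ'.extent = d ∧ ρ'.first.1 = k + e - d :=
  statement9_general N R ρ hρ hrc k e hk he d hd1 hde
end

section
/- Let μ be a repeating path in an unfolding of the constraint graph of a difference bounds constraint over N variables with |positions(μ)| ≤ N²+1. Then for every k ≥ 1, the k-fold concatenation μ^k contains no long-corner subpath: lcorners(μ^k) = ∅. -/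
variable {N : ℕ}

/-! Consecutive vertices of a path in the unfolding are at most one position apart, so the
positions of `μ` form an interval; with at most `N² + 1` of them, they fit in a window of
width `N²`. In `μ^k` the copies of `μ` are shifted monotonically in the direction `σ = ±1` of
the drift of `μ`, so along `μ^k` the quantity `σ · position` never drops by more than `N²`.
A corner starts and ends at the same position `p`, so each of its positions `x` satisfies both
`σ p ≤ σ x + N²` and `σ x ≤ σ p + N²`; hence its extent is at most `N²`. -/

theorem List.IsChain.forall_lt_or_forall_gt {l : List ℤ}
    (hl : l.IsChain fun a b => |b - a| ≤ 1) {v : ℤ} (hv : v ∉ l) :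
    (∀ x ∈ l, x < v) ∨ ∀ x ∈ l, v < x := by
  match l, hl with
  | [], _ => simp
  | [a], _ =>
    simp only [List.mem_singleton, forall_eq]
    exact lt_or_gt_of_ne (by simpa [eq_comm] using hv)
  | a :: b :: t, hl =>
    rw [List.isChain_cons_cons] at hl
    have hva : a ≠ v := fun h => hv (h ▸ List.mem_cons_self)
    have hab := abs_le.mp hl.1
    rcases hl.2.forall_lt_or_forall_gt (fun h => hv (List.mem_cons_of_mem a h)) with h | h
    · have := h b List.mem_cons_self
      exact Or.inl (List.forall_mem_cons.mpr ⟨by omega, h⟩)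
    · have := h b List.mem_cons_self
      exact Or.inr (List.forall_mem_cons.mpr ⟨by omega, h⟩)

theorem List.IsChain.mem_of_le_of_le {l : List ℤ}
    (hl : l.IsChain fun a b => |b - a| ≤ 1) {x y v : ℤ} (hx : x ∈ l) (hy : y ∈ l)
    (hxv : x ≤ v) (hvy : v ≤ y) : v ∈ l := by
  by_contra hv
  rcases hl.forall_lt_or_forall_gt hv with h | h
  · exact absurd (h y hy) (not_lt.2 hvy)
  · exact absurd (h x hx) (not_lt.2 hxv)

namespace UPath

variable {N : ℕ}

theorem posList_eq (ρ : UPath N) : ρ.posList = ρ.first.1 :: ρ.steps.map (·.2.1) := by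
  simp [posList, vertices]

theorem getLast_posList (ρ : UPath N) :
    ρ.posList.getLast (by simp [posList_eq]) = ρ.last.1 := by
  simp only [posList, List.getLast_map, vertices, List.getLast_eq_getLastD, last]

theorem posList_eq_dropLast_append (ρ : UPath N) :
    ρ.posList = ρ.posList.dropLast ++ [ρ.last.1] := by
  rw [← getLast_posList, List.dropLast_append_getLast]

theorem pow_succ (μ : UPath N) (k : ℕ) : μ.pow (k + 1) = (μ.pow k).glue μ := rfl

theorem posList_glue (ρ π : UPath N) :
    (ρ.glue π).posList =
      ρ.posList ++ (π.steps.map (·.2.1)).map (· + (ρ.last.1 - π.first.1)) := by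
  simp [posList_eq, glue, append, shift]

theorem last_glue (ρ π : UPath N) :
    (ρ.glue π).last.1 = π.last.1 + (ρ.last.1 - π.first.1) := by
  rcases List.eq_nil_or_concat π.steps with h | ⟨l, s, h⟩ <;>
    simp [glue, append, shift, last, h]

theorem IsSubpath.posList_infix {θ ρ : UPath N} (h : θ.IsSubpath ρ) :
    θ.posList <:+: ρ.posList := by
  obtain ⟨pre, post, hsteps, hfirst⟩ := h
  set P := posList ⟨ρ.first, pre⟩
  have hP : P = ρ.first.1 :: pre.map (·.2.1) := posList_eq _
  have hPlast : P = P.dropLast ++ [θ.first.1] := hfirst ▸ posList_eq_dropLast_append _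
  refine ⟨P.dropLast, post.map (·.2.1), ?_⟩
  rw [posList_eq θ, posList_eq ρ, hsteps, List.map_append, List.map_append,
    ← List.cons_append, ← List.cons_append, ← hP, hPlast]
  simp

theorem abs_sub_le_one_of_edge {R : DBC N} {u v : Vtx N} {c : ℤ} (h : R.Edge u v c) :
    |v.1 - u.1| ≤ 1 := by
  obtain ⟨p, s, t, -, rfl, rfl⟩ := h
  cases s <;> cases t <;> simp [endpt]

theorem InUnf.isChain_posList {R : DBC N} {ρ : UPath N} (h : ρ.InUnf R) :
    ρ.posList.IsChain fun a b => |b - a| ≤ 1 := by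
  obtain ⟨u, steps⟩ := ρ
  induction steps generalizing u with
  | nil => simp [posList_eq]
  | cons s steps ih =>
    have hrest := ih s.2 h.2
    rw [posList_eq] at hrest ⊢
    exact List.isChain_cons_cons.mpr ⟨abs_sub_le_one_of_edge h.1, hrest⟩

theorem InUnf.exists_forall_mem_posList_le_lt {R : DBC N} {ρ : UPath N} (h : ρ.InUnf R) :
    ∃ m : ℤ, ∀ x ∈ ρ.posList, m ≤ x ∧ x < m + ρ.posFinset.card := by
  set m := ρ.posFinset.min' ρ.posFinset_nonempty
  set M := ρ.posFinset.max' ρ.posFinset_nonempty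
  have hIcc : Finset.Icc m M ⊆ ρ.posFinset := fun v hv => by
    rw [Finset.mem_Icc] at hv
    exact List.mem_toFinset.mpr (h.isChain_posList.mem_of_le_of_le
      (List.mem_toFinset.mp (Finset.min'_mem _ _))
      (List.mem_toFinset.mp (Finset.max'_mem _ _)) hv.1 hv.2)
  have hcard := Finset.card_le_card hIcc
  rw [Int.card_Icc] at hcard
  refine ⟨m, fun x hx => ?_⟩
  have hx' : x ∈ ρ.posFinset := List.mem_toFinset.mpr hx
  have := Finset.min'_le _ _ hx'
  have := Finset.le_max' _ _ hx'
  omega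

theorem pairwise_posList_pow {μ : UPath N} {σ a E : ℤ}
    (hμ : ∀ x ∈ μ.posList, a ≤ σ * x ∧ σ * x ≤ a + E)
    (hdir : σ * μ.first.1 ≤ σ * μ.last.1) (k : ℕ) :
    (μ.pow k).posList.Pairwise (fun x y => σ * x ≤ σ * y + E) ∧
      ∀ x ∈ (μ.pow k).posList, σ * x ≤ a + E + σ * ((μ.pow k).last.1 - μ.first.1) := by
  induction k with
  | zero =>
    simpa [pow, posList_eq, last] using (hμ _ (posList_eq μ ▸ List.mem_cons_self)).2
  | succ k ih =>
    obtain ⟨hpair, hbound⟩ := ih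
    set c := (μ.pow k).last.1 - μ.first.1
    have hnew : ∀ y ∈ (μ.steps.map (·.2.1)).map (· + c),
        a + σ * c ≤ σ * y ∧ σ * y ≤ a + E + σ * c := by
      intro y hy
      obtain ⟨z, hz, rfl⟩ := List.mem_map.mp hy
      have := hμ z (posList_eq μ ▸ List.mem_cons_of_mem _ hz)
      constructor <;> linarith [mul_add σ z c]
    have hdrift : 0 ≤ σ * (μ.last.1 - μ.first.1) := by rw [mul_sub]; linarith
    rw [UPath.pow_succ, posList_glue, last_glue,
      show μ.last.1 + c - μ.first.1 = c + (μ.last.1 - μ.first.1) by ring, mul_add]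
    refine ⟨?_, ?_⟩
    · rw [List.pairwise_append]
      refine ⟨hpair, List.pairwise_of_forall_mem_list fun x hx y hy => ?_,
        fun x hx y hy => ?_⟩
      · linarith [hnew x hx, hnew y hy]
      · linarith [hbound x hx, hnew y hy]
    · intro x hx
      rcases List.mem_append.mp hx with hx | hx
      · linarith [hbound x hx]
      · linarith [hnew x hx]

theorem exists_abs_eq_one_pairwise_posList_pow {μ : UPath N} {m E : ℤ}
    (hμ : ∀ x ∈ μ.posList, m ≤ x ∧ x ≤ m + E) :
    ∃ σ : ℤ, |σ| = 1 ∧ ∀ k, (μ.pow k).posList.Pairwise (fun x y => σ * x ≤ σ * y + E) := by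
  rcases le_total μ.first.1 μ.last.1 with hdir | hdir
  · refine ⟨1, abs_one, fun k => (pairwise_posList_pow (a := m) ?_ ?_ k).1⟩
    · simpa using hμ
    · simpa using hdir
  · refine ⟨-1, by simp, fun k => (pairwise_posList_pow (a := -(m + E)) ?_ ?_ k).1⟩
    · intro x hx
      have := hμ x hx
      constructor <;> linarith
    · simpa using hdir

theorem abs_sub_first_le_of_pairwise {θ : UPath N} (hvert : θ.last.1 = θ.first.1)
    {σ E : ℤ} (hσ : |σ| = 1) (hE : 0 ≤ E)
    (h : θ.posList.Pairwise (fun x y => σ * x ≤ σ * y + E)) :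
    ∀ x ∈ θ.posList, |x - θ.first.1| ≤ E := by
  intro x hx
  suffices |σ * (x - θ.first.1)| ≤ E by rwa [abs_mul, hσ, one_mul] at this
  have hfirst : x = θ.first.1 ∨ σ * θ.first.1 ≤ σ * x + E := by
    rw [posList_eq] at h hx
    exact (List.mem_cons.mp hx).imp_right ((List.pairwise_cons.mp h).1 x)
  have hlast : x = θ.first.1 ∨ σ * x ≤ σ * θ.first.1 + E := by
    rw [posList_eq_dropLast_append, hvert] at h hx
    rcases List.mem_append.mp hx with hx | hx
    · exact Or.inr ((List.pairwise_append.mp h).2.2 x hx _ (List.mem_singleton_self _))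
    · exact Or.inl (List.mem_singleton.mp hx)
  rcases hfirst with rfl | hfirst
  · simpa using hE
  rcases hlast with rfl | hlast
  · simpa using hE
  rw [mul_sub, abs_le]
  constructor <;> linarith

theorem IsCorner.extent_le {θ : UPath N} (hθ : θ.IsCorner) {E : ℤ}
    (h : ∀ x ∈ θ.posList, |x - θ.first.1| ≤ E) : θ.extent ≤ E := by
  have hmin := List.mem_toFinset.mp (θ.posFinset.min'_mem θ.posFinset_nonempty)
  have hmax := List.mem_toFinset.mp (θ.posFinset.max'_mem θ.posFinset_nonempty)
  have h1 := abs_le.mp (h _ hmin)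
  have h2 := abs_le.mp (h _ hmax)
  unfold extent
  rcases hθ with ⟨-, -, d, hpos⟩ | ⟨-, -, d, hpos⟩
  · have := (Finset.ext_iff.mp hpos _).mp (θ.posFinset.min'_mem θ.posFinset_nonempty)
    rw [Finset.mem_Icc] at this
    linarith
  · have := (Finset.ext_iff.mp hpos _).mp (θ.posFinset.max'_mem θ.posFinset_nonempty)
    rw [Finset.mem_Icc] at this
    linarith

end UPath

theorem statement11_general (N : ℕ) (R : DBC N) (μ : UPath N)
    (hμ : μ.InUnf R)
    (hcard : μ.posFinset.card ≤ N ^ 2 + 1) :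
    ∀ k : ℕ, 1 ≤ k → ∀ θ : UPath N, θ.IsSubpath (μ.pow k) → ¬ θ.IsLongCorner := by
  intro k _ θ hsub ⟨hcorner, hlong⟩
  obtain ⟨m, hm⟩ := hμ.exists_forall_mem_posList_le_lt
  have hwindow : ∀ x ∈ μ.posList, m ≤ x ∧ x ≤ m + (N : ℤ) ^ 2 := fun x hx => by
    have := hm x hx
    have : (μ.posFinset.card : ℤ) ≤ N ^ 2 + 1 := by exact_mod_cast hcard
    omega
  obtain ⟨σ, hσ, hpow⟩ := UPath.exists_abs_eq_one_pairwise_posList_pow hwindow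
  have hvert : θ.last.1 = θ.first.1 := by rcases hcorner with h | h <;> exact h.2.1
  have := hcorner.extent_le (UPath.abs_sub_first_le_of_pairwise hvert hσ (by positivity)
    ((hpow k).sublist hsub.posList_infix.sublist))
  omega

/-- Powers of a repeating path visiting at most `N² + 1`
positions contain no long corner. -/
theorem statement11 (N : ℕ) (hN : 1 ≤ N) (R : DBC N) (μ : UPath N)
    (hμ : μ.InUnf R) (hrep : μ.IsRepeating)
    (hcard : μ.posFinset.card ≤ N ^ 2 + 1) :
    ∀ k : ℕ, 1 ≤ k → ∀ θ : UPath N, θ.IsSubpath (μ.pow k) → ¬ θ.IsLongCorner :=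
  statement11_general N R μ hμ hcard
end

section
/- Let R(x,x') be a balanced difference bounds constraint over N variables, let n ≥ 1, and let θ be a short corner in G_R^n (a corner of extent at most N²) of the form x_i^(k) →…→ x_j^(k). If θ is a right corner, then every valuation ν : x → ℤ satisfying S_fw (i.e., such that there exists ν' with (ν,ν') ∈ R^{N²}) satisfies ν(x_i) − ν(x_j) ≤ w(θ); if θ is a left corner, then every valuation ν' satisfying S_bw (i.e., such that there exists ν with (ν,ν') ∈ R^{N²}) satisfies ν'(x_i) − ν'(x_j) ≤ w(θ). Consequently, every pair of valuations in the relation R_s := R ∧ S_fw(x) ∧ S_bw(x') satisfies the corresponding bound. -/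
variable {N : ℕ}

/-! A witness of `R^{N²}` is a chain of `N² + 1` valuations. Placing them at the positions
`k, …, k + N²` (right corner) or `k - N², …, k` (left corner) of the unfolding turns them into a
potential satisfying every edge of the short corner `θ`, since `θ` stays within this window; an
edge joining two copies of a boundary position is satisfied because `R` is balanced. Summing the
edges of `θ` gives `ν i - ν j ≤ w(θ)` for the valuation `ν` at position `k`. -/

theorem relPow_exists_chain {P : Val N → Val N → Prop} (M : ℕ) :
    ∀ {ν ν' : Val N}, relPow P M ν ν' → ∀ a : ℤ, ∃ f : ℤ → Val N,
      f a = ν ∧ f (a + M) = ν' ∧ ∀ m, a ≤ m → m < a + M → P (f m) (f (m + 1)) := by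
  induction M with
  | zero =>
    rintro ν ν' rfl a
    exact ⟨fun _ => ν, rfl, rfl, fun m h₁ h₂ => by omega⟩
  | succ M ih =>
    rintro ν ν' ⟨μ, hνμ, hμν'⟩ a
    obtain ⟨f, hfa, hfM, hf⟩ := ih hμν' (a + 1)
    refine ⟨fun q => if q ≤ a then ν else f q, by simp, ?_, fun m h₁ h₂ => ?_⟩
    · dsimp only
      rw [if_neg (by push_cast; omega)]
      convert hfM using 2
      push_cast
      ring
    · rcases h₁.eq_or_lt with rfl | h₁
      · simpa [hfa] using hνμ
      · simpa [show ¬ m ≤ a by omega, show ¬ m + 1 ≤ a by omega] using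
          hf m (by omega) (by push_cast at h₂; omega)

theorem interp_endpt (f : ℤ → Val N) (p : ℤ) (s : Fin N ⊕ Fin N) :
    f (endpt p s).1 (endpt p s).2 = interp (f p) (f (p + 1)) s := by
  cases s <;> rfl

namespace DBC

variable {R : DBC N}

theorem rel.interp_sub_le {ν ν' : Val N} (h : R.rel ν ν') {s t : Fin N ⊕ Fin N} {c : ℤ}
    (hst : (s, t, c) ∈ R.atoms) : interp ν ν' s - interp ν ν' t ≤ c :=
  h _ hst

theorem Balanced.sub_le_of_rel_of_inl (hbal : R.Balanced) {ν ν' : Val N} (h : R.rel ν ν')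
    {i j : Fin N} {c : ℤ} (hij : (Sum.inl i, Sum.inl j, c) ∈ R.atoms) : ν' i - ν' j ≤ c :=
  h.interp_sub_le ((hbal i j c).mp hij)

theorem Balanced.sub_le_of_rel_of_inr (hbal : R.Balanced) {ν ν' : Val N} (h : R.rel ν ν')
    {i j : Fin N} {c : ℤ} (hij : (Sum.inr i, Sum.inr j, c) ∈ R.atoms) : ν i - ν j ≤ c :=
  h.interp_sub_le ((hbal i j c).mpr hij)

theorem Balanced.sub_le_of_edge (hbal : R.Balanced) {a b : ℤ} (hab : a < b) {f : ℤ → Val N}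
    (hf : ∀ m, a ≤ m → m < b → R.rel (f m) (f (m + 1))) {u v : Vtx N} {c : ℤ}
    (huv : R.Edge u v c) (hu : u.1 ∈ Finset.Icc a b) (hv : v.1 ∈ Finset.Icc a b) :
    f u.1 u.2 - f v.1 v.2 ≤ c := by
  obtain ⟨p, s, t, hst, rfl, rfl⟩ := huv
  rw [Finset.mem_Icc] at hu hv
  by_cases hp : a ≤ p ∧ p < b
  · rw [interp_endpt f, interp_endpt f]
    exact (hf p hp.1 hp.2).interp_sub_le hst
  -- An edge from a copy outside `[a, b)` joins two vertices at position `b` (copy `b`) or `a`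
  -- (copy `a - 1`); balancedness lets copy `b - 1`, resp. `a`, witness it instead.
  cases s <;> cases t <;> simp only [endpt] at hu hv ⊢
  case inl.inl i j =>
    have := hbal.sub_le_of_rel_of_inl (hf (p - 1) (by omega) (by omega)) hst
    rwa [sub_add_cancel] at this
  case inr.inr i j =>
    rw [show p + 1 = a by omega]
    exact hbal.sub_le_of_rel_of_inr (hf a le_rfl hab) hst
  all_goals omega

end DBC

namespace UPath

theorem edgeChain_mono {E E' : Vtx N → Vtx N → ℤ → Prop}
    (h : ∀ u v c, E u v c → E' u v c) :
    ∀ {u : Vtx N} {l : List (ℤ × Vtx N)}, EdgeChain E u l → EdgeChain E' u l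
  | _, [], _ => trivial
  | _, _ :: _, ⟨he, hl⟩ => ⟨h _ _ _ he, edgeChain_mono h hl⟩

theorem InUnfN.inUnf {R : DBC N} {n : ℕ} {ρ : UPath N} (hρ : ρ.InUnfN R n) : ρ.InUnf R :=
  edgeChain_mono (fun _ _ _ ⟨p, _, _, he⟩ => ⟨p, he⟩) hρ

theorem mem_posFinset_s16 {ρ : UPath N} {w : Vtx N} (hw : w ∈ ρ.vertices) : w.1 ∈ ρ.posFinset :=
  List.mem_toFinset.mpr (List.mem_map_of_mem hw)

theorem sub_le_extent (ρ : UPath N) {p q : ℤ} (hp : p ∈ ρ.posFinset) (hq : q ∈ ρ.posFinset) :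
    q - p ≤ ρ.extent :=
  sub_le_sub (Finset.le_max' _ _ hq) (Finset.min'_le _ _ hp)

theorem sub_le_extent_of_posFinset_eq_Icc {ρ : UPath N} {p q : ℤ}
    (h : ρ.posFinset = Finset.Icc p q) : q - p ≤ ρ.extent := by
  have hpq : p ≤ q := Finset.nonempty_Icc.mp (h ▸ ρ.posFinset_nonempty)
  exact ρ.sub_le_extent (h ▸ Finset.left_mem_Icc.mpr hpq) (h ▸ Finset.right_mem_Icc.mpr hpq)

theorem sub_last_le_weight {E : Vtx N → Vtx N → ℤ → Prop} (φ : Vtx N → ℤ) :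
    ∀ (ρ : UPath N), EdgeChain E ρ.first ρ.steps →
      (∀ u v c, E u v c → u ∈ ρ.vertices → v ∈ ρ.vertices → φ u - φ v ≤ c) →
      φ ρ.first - φ ρ.last ≤ ρ.weight
  | ⟨u, []⟩, _, _ => by simp [last, weight]
  | ⟨u, (c, v) :: l⟩, ⟨huv, hl⟩, hφ => by
    have hedge := hφ u v c huv (by simp [vertices]) (by simp [vertices])
    have hrest := sub_last_le_weight φ ⟨v, l⟩ hl fun u' v' c' h hu' hv' =>
      hφ u' v' c' h (List.mem_cons_of_mem _ hu') (List.mem_cons_of_mem _ hv')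
    have hlast : (⟨u, (c, v) :: l⟩ : UPath N).last = (⟨v, l⟩ : UPath N).last := by
      simp only [last, List.map_cons, List.getLastD_cons]
    have hweight : (⟨u, (c, v) :: l⟩ : UPath N).weight = c + (⟨v, l⟩ : UPath N).weight := by
      simp [weight]
    rw [hlast, hweight]
    linarith

theorem sub_last_le_weight_of_window {R : DBC N} (hbal : R.Balanced) {ρ : UPath N}
    (hρ : ρ.InUnf R) {a b : ℤ} (hab : a < b) (hpos : ρ.posFinset ⊆ Finset.Icc a b)
    {f : ℤ → Val N} (hf : ∀ m, a ≤ m → m < b → R.rel (f m) (f (m + 1))) :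
    f ρ.first.1 ρ.first.2 - f ρ.last.1 ρ.last.2 ≤ ρ.weight :=
  sub_last_le_weight (fun w => f w.1 w.2) ρ hρ fun _ _ _ huv hu hv =>
    hbal.sub_le_of_edge hab hf huv (hpos (mem_posFinset_s16 hu)) (hpos (mem_posFinset_s16 hv))

theorem IsRightCorner.sub_le_weight_of_sfw {R : DBC N} (hbal : R.Balanced) {n : ℕ}
    {θ : UPath N} (hθ : θ.InUnfN R n) (hright : θ.IsRightCorner)
    (hshort : θ.extent ≤ (N : ℤ) ^ 2) {k : ℤ} {i j : Fin N}
    (hf : θ.first = (k, i)) (hl : θ.last = (k, j)) {ν : Val N} (hν : Sfw R ν) :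
    ν i - ν j ≤ θ.weight := by
  obtain ⟨-, -, d, hpos⟩ := hright
  obtain ⟨ν', hνν'⟩ := hν
  obtain ⟨f, hfk, -, hf_chain⟩ := relPow_exists_chain _ hνν' k
  push_cast at hf_chain
  rw [hf] at hpos
  dsimp only at hpos
  have hd := (θ.sub_le_extent_of_posFinset_eq_Icc hpos).trans hshort
  have hN : (0 : ℤ) < (N : ℤ) ^ 2 := by have := i.pos; positivity
  have hwindow : θ.posFinset ⊆ Finset.Icc k (k + (N : ℤ) ^ 2) := by
    rw [hpos]; exact Finset.Icc_subset_Icc_right (by linarith)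
  have key := sub_last_le_weight_of_window hbal hθ.inUnf (by omega) hwindow hf_chain
  rwa [hf, hl, hfk] at key

theorem IsLeftCorner.sub_le_weight_of_sbw {R : DBC N} (hbal : R.Balanced) {n : ℕ}
    {θ : UPath N} (hθ : θ.InUnfN R n) (hleft : θ.IsLeftCorner)
    (hshort : θ.extent ≤ (N : ℤ) ^ 2) {k : ℤ} {i j : Fin N}
    (hf : θ.first = (k, i)) (hl : θ.last = (k, j)) {ν' : Val N} (hν' : Sbw R ν') :
    ν' i - ν' j ≤ θ.weight := by
  obtain ⟨-, -, d, hpos⟩ := hleft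
  obtain ⟨ν, hνν'⟩ := hν'
  obtain ⟨f, -, hfk, hf_chain⟩ := relPow_exists_chain _ hνν' (k - (N : ℤ) ^ 2)
  push_cast at hfk hf_chain
  rw [sub_add_cancel] at hfk hf_chain
  rw [hf] at hpos
  dsimp only at hpos
  have hd := (θ.sub_le_extent_of_posFinset_eq_Icc hpos).trans hshort
  have hN : (0 : ℤ) < (N : ℤ) ^ 2 := by have := i.pos; positivity
  have hwindow : θ.posFinset ⊆ Finset.Icc (k - (N : ℤ) ^ 2) k := by
    rw [hpos]; exact Finset.Icc_subset_Icc_left (by linarith)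
  have key := sub_last_le_weight_of_window hbal hθ.inUnf (by omega) hwindow hf_chain
  rwa [hf, hl, hfk] at key

end UPath

theorem statement16_general (N : ℕ) (R : DBC N) (hbal : R.Balanced)
    (n : ℕ) (θ : UPath N) (hθ : θ.InUnfN R n)
    (hshort : θ.extent ≤ (N : ℤ) ^ 2)
    (k : ℤ) (i j : Fin N) (hf : θ.first = (k, i)) (hl : θ.last = (k, j)) :
    (θ.IsRightCorner → ∀ ν : Val N, Sfw R ν → ν i - ν j ≤ θ.weight) ∧
    (θ.IsLeftCorner → ∀ ν' : Val N, Sbw R ν' → ν' i - ν' j ≤ θ.weight) ∧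
    (∀ ν ν' : Val N, Rs R ν ν' →
      (θ.IsRightCorner → ν i - ν j ≤ θ.weight) ∧
      (θ.IsLeftCorner → ν' i - ν' j ≤ θ.weight)) := by
  have right (hright : θ.IsRightCorner) (ν : Val N) (hν : Sfw R ν) :=
    hright.sub_le_weight_of_sfw hbal hθ hshort hf hl hν
  have left (hleft : θ.IsLeftCorner) (ν' : Val N) (hν' : Sbw R ν') :=
    hleft.sub_le_weight_of_sbw hbal hθ hshort hf hl hν'
  exact ⟨right, left, fun ν ν' hs => ⟨fun h => right h ν hs.2.1, fun h => left h ν' hs.2.2⟩⟩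

/-- Short corners are shortcut by the strengthened relation:
a short right (resp. left) corner `x_i^(k) → … → x_j^(k)` yields the bound
`x_i − x_j ≤ w(θ)` on `S_fw` (resp. on `S_bw`), and hence on `R_s`. -/
theorem statement16 (N : ℕ) (hN : 1 ≤ N) (R : DBC N) (hbal : R.Balanced)
    (n : ℕ) (hn : 1 ≤ n) (θ : UPath N) (hθ : θ.InUnfN R n)
    (hcor : θ.IsCorner) (hshort : θ.extent ≤ (N : ℤ) ^ 2)
    (k : ℤ) (i j : Fin N) (hf : θ.first = (k, i)) (hl : θ.last = (k, j)) :
    (θ.IsRightCorner → ∀ ν : Val N, Sfw R ν → ν i - ν j ≤ θ.weight) ∧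
    (θ.IsLeftCorner → ∀ ν' : Val N, Sbw R ν' → ν' i - ν' j ≤ θ.weight) ∧
    (∀ ν ν' : Val N, Rs R ν ν' →
      (θ.IsRightCorner → ν i - ν j ≤ θ.weight) ∧
      (θ.IsLeftCorner → ν' i - ν' j ≤ θ.weight)) :=
  statement16_general N R hbal n θ hθ hshort k i j hf hl
end
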